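/- Let n, m be positive integers, A an n×n real matrix, B an n×m real matrix, Q and Q_f symmetric positive semidefinite n×n real matrices, R a symmetric positive definite m×m real matrix, t_f > 0 a real number, and r₀ ∈ ℝⁿ. Define the 2n×2n Hamiltonian matrix M = [[A, −B R⁻¹ Bᵀ], [−Q, −Aᵀ]], and for t ∈ ℝ define H(t) = [I 0]·exp(−t M)·[I; Q_f] and G(t) = [0 I]·exp(−t M)·[I; Q_f] (the upper and lower n×n blocks of exp(−tM)·[I; Q_f]). Assume H(t_f) is invertible. Then the curves r(t) = H(t_f − t)·H(t_f)⁻¹·r₀ and ψ(t) = G(t_f − t)·H(t_f)⁻¹·r₀ satisfy, for all t ∈ [0, t_f], the two-point boundary value system r'(t) = A r(t) − B R⁻¹ Bᵀ ψ(t), ψ'(t) = −Q r(t) − Aᵀ ψ(t), together with the boundary conditions r(0) = r₀ and ψ(t_f) = Q_f r(t_f). -/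

import Mathlib

open Matrix

/-!
Write `z(t) = exp((t - t_f) M) w` with `w = [I; Q_f] H(t_f)⁻¹ r₀`. Then `z' = M z`, and `r`, `ψ` are
the upper and lower blocks of `z`, so the block form of `M` gives the two differential equations.
At `t = t_f` the exponential is the identity, so `z(t_f) = w`, whose lower block is `Q_f` times its
upper block; at `t = 0` the upper block is `H(t_f) H(t_f)⁻¹ r₀ = r₀`.
-/

namespace Matrix

variable {𝕂 ι : Type*} [RCLike 𝕂] [Fintype ι] [DecidableEq ι]

-- Any norm would do: on a finite-dimensional space they all induce the same topology.
attribute [local instance] Matrix.linftyOpNormedRing Matrix.linftyOpNormedAlgebra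

theorem hasDerivAt_exp_smul_mulVec (M : Matrix ι ι 𝕂) (v : ι → 𝕂) (t : 𝕂) :
    HasDerivAt (fun s : 𝕂 => NormedSpace.exp (s • M) *ᵥ v)
      (M *ᵥ (NormedSpace.exp (t • M) *ᵥ v)) t := by
  let applyTo : Matrix ι ι 𝕂 →L[𝕂] ι → 𝕂 :=
    LinearMap.toContinuousLinearMap (LinearMap.applyₗ v ∘ₗ Matrix.toLin'.toLinearMap)
  have h := applyTo.hasFDerivAt.comp_hasDerivAt t (hasDerivAt_exp_smul_const' M t)
  exact h.congr_deriv (mulVec_mulVec v M _).symm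

theorem hasDerivAt_exp_sub_smul_mulVec (M : Matrix ι ι 𝕂) (v : ι → 𝕂) (c t : 𝕂) :
    HasDerivAt (fun s : 𝕂 => NormedSpace.exp (-((c - s) • M)) *ᵥ v)
      (M *ᵥ (NormedSpace.exp (-((c - t) • M)) *ᵥ v)) t := by
  simp only [← neg_smul, neg_sub]
  exact (hasDerivAt_exp_smul_mulVec M v (t - c)).comp_sub_const t c

end Matrix

section

variable {𝕂 ι κ : Type*} [NontriviallyNormedField 𝕂]
  {z : 𝕂 → ι ⊕ κ → 𝕂} {z' : ι ⊕ κ → 𝕂} {t : 𝕂}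

theorem HasDerivAt.comp_sumInl (h : HasDerivAt z z' t) :
    HasDerivAt (fun s => z s ∘ Sum.inl) (z' ∘ Sum.inl) t :=
  hasDerivAt_pi.2 fun i => hasDerivAt_pi.1 h (Sum.inl i)

theorem HasDerivAt.comp_sumInr (h : HasDerivAt z z' t) :
    HasDerivAt (fun s => z s ∘ Sum.inr) (z' ∘ Sum.inr) t :=
  hasDerivAt_pi.2 fun i => hasDerivAt_pi.1 h (Sum.inr i)

end

theorem stmt_0_general (n m : ℕ)
    (A : Matrix (Fin n) (Fin n) ℝ) (B : Matrix (Fin n) (Fin m) ℝ)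
    (Q Qf : Matrix (Fin n) (Fin n) ℝ) (R : Matrix (Fin m) (Fin m) ℝ)
    (tf : ℝ) (r₀ : Fin n → ℝ)
    (M : Matrix (Fin n ⊕ Fin n) (Fin n ⊕ Fin n) ℝ)
    (hM : M = Matrix.fromBlocks A (-(B * R⁻¹ * Bᵀ)) (-Q) (-Aᵀ))
    (H G : ℝ → Matrix (Fin n) (Fin n) ℝ)
    (hH : ∀ t : ℝ, H t =
      Matrix.fromCols (1 : Matrix (Fin n) (Fin n) ℝ) (0 : Matrix (Fin n) (Fin n) ℝ) *
        NormedSpace.exp (-(t • M)) * Matrix.fromRows (1 : Matrix (Fin n) (Fin n) ℝ) Qf)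
    (hG : ∀ t : ℝ, G t =
      Matrix.fromCols (0 : Matrix (Fin n) (Fin n) ℝ) (1 : Matrix (Fin n) (Fin n) ℝ) *
        NormedSpace.exp (-(t • M)) * Matrix.fromRows (1 : Matrix (Fin n) (Fin n) ℝ) Qf)
    (hHtf : IsUnit (H tf))
    (r ψ : ℝ → Fin n → ℝ)
    (hr : ∀ t : ℝ, r t = (H (tf - t) * (H tf)⁻¹).mulVec r₀)
    (hψ : ∀ t : ℝ, ψ t = (G (tf - t) * (H tf)⁻¹).mulVec r₀) :
    (∀ t ∈ Set.Icc (0 : ℝ) tf,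
        HasDerivAt r (A.mulVec (r t) - (B * R⁻¹ * Bᵀ).mulVec (ψ t)) t) ∧
    (∀ t ∈ Set.Icc (0 : ℝ) tf,
        HasDerivAt ψ (-(Q.mulVec (r t)) - Aᵀ.mulVec (ψ t)) t) ∧
    r 0 = r₀ ∧ ψ tf = Qf.mulVec (r tf) := by
  set w := fromRows (1 : Matrix (Fin n) (Fin n) ℝ) Qf *ᵥ ((H tf)⁻¹ *ᵥ r₀)
  set z : ℝ → Fin n ⊕ Fin n → ℝ := fun s => NormedSpace.exp (-((tf - s) • M)) *ᵥ w
  have hrz : r = fun s => z s ∘ Sum.inl := by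
    funext s
    simp [hr, hH, z, w, ← mulVec_mulVec]
  have hψz : ψ = fun s => z s ∘ Sum.inr := by
    funext s
    simp [hψ, hG, z, w, ← mulVec_mulVec]
  have hz (t : ℝ) : HasDerivAt z (M *ᵥ z t) t := hasDerivAt_exp_sub_smul_mulVec M w tf t
  refine ⟨fun t _ => ?_, fun t _ => ?_, ?_, ?_⟩
  · convert (hz t).comp_sumInl using 1
    simp [hrz, hψz, hM, fromBlocks_mulVec, neg_mulVec, sub_eq_add_neg]
  · convert (hz t).comp_sumInr using 1
    simp [hrz, hψz, hM, fromBlocks_mulVec, neg_mulVec, sub_eq_add_neg]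
  · rw [hr, sub_zero, mul_nonsing_inv _ ((isUnit_iff_isUnit_det _).mp hHtf), one_mulVec]
  · simp [hrz, hψz, z, w]

/-- The curves `r(t) = H(t_f − t) H(t_f)⁻¹ r₀` and
`ψ(t) = G(t_f − t) H(t_f)⁻¹ r₀`, built from the Hamiltonian matrix
`M = [[A, −B R⁻¹ Bᵀ], [−Q, −Aᵀ]]` via `H(t) = [I 0] exp(−tM) [I; Q_f]` and
`G(t) = [0 I] exp(−tM) [I; Q_f]`, solve the state/costate two-point boundary
value problem of the finite-horizon LQ formation planning problem. -/
theorem stmt_0 (n m : ℕ) (hn : 0 < n) (hm : 0 < m)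
    (A : Matrix (Fin n) (Fin n) ℝ) (B : Matrix (Fin n) (Fin m) ℝ)
    (Q Qf : Matrix (Fin n) (Fin n) ℝ) (R : Matrix (Fin m) (Fin m) ℝ)
    (hQ : Q.PosSemidef) (hQf : Qf.PosSemidef) (hR : R.PosDef)
    (tf : ℝ) (htf : 0 < tf) (r₀ : Fin n → ℝ)
    (M : Matrix (Fin n ⊕ Fin n) (Fin n ⊕ Fin n) ℝ)
    (hM : M = Matrix.fromBlocks A (-(B * R⁻¹ * Bᵀ)) (-Q) (-Aᵀ))
    (H G : ℝ → Matrix (Fin n) (Fin n) ℝ)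
    (hH : ∀ t : ℝ, H t =
      Matrix.fromCols (1 : Matrix (Fin n) (Fin n) ℝ) (0 : Matrix (Fin n) (Fin n) ℝ) *
        NormedSpace.exp (-(t • M)) * Matrix.fromRows (1 : Matrix (Fin n) (Fin n) ℝ) Qf)
    (hG : ∀ t : ℝ, G t =
      Matrix.fromCols (0 : Matrix (Fin n) (Fin n) ℝ) (1 : Matrix (Fin n) (Fin n) ℝ) *
        NormedSpace.exp (-(t • M)) * Matrix.fromRows (1 : Matrix (Fin n) (Fin n) ℝ) Qf)
    (hHtf : IsUnit (H tf))
    (r ψ : ℝ → Fin n → ℝ)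
    (hr : ∀ t : ℝ, r t = (H (tf - t) * (H tf)⁻¹).mulVec r₀)
    (hψ : ∀ t : ℝ, ψ t = (G (tf - t) * (H tf)⁻¹).mulVec r₀) :
    (∀ t ∈ Set.Icc (0 : ℝ) tf,
        HasDerivAt r (A.mulVec (r t) - (B * R⁻¹ * Bᵀ).mulVec (ψ t)) t) ∧
    (∀ t ∈ Set.Icc (0 : ℝ) tf,
        HasDerivAt ψ (-(Q.mulVec (r t)) - Aᵀ.mulVec (ψ t)) t) ∧
    r 0 = r₀ ∧ ψ tf = Qf.mulVec (r tf) :=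
  stmt_0_general n m A B Q Qf R tf r₀ M hM H G hH hG hHtf r ψ hr hψ
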